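/- Fix α > 0 and a constant c* ≠ 0. The function k(r) = c*/r^α cannot be written in the form k(r) = ∫₀^∞ M_{u,α}(r) μ(du) for any positive measure μ on (0,∞), where M_{u,α}(r) = ∫₀¹ e^{-zur} z^{α-1} dz. -/

import Mathlib

/-!
Substituting `t = z r` gives `r^α M_{u,α}(r) = ∫₀ʳ e^{-tu} t^{α-1} dt`, which is strictly increasing
in `r` for every `u` because the integrand is positive. Hence `r^α ∫ M_{u,α}(r) μ(du)` is strictly
increasing as soon as `μ ≠ 0`, while `r^α k(r) = c*` is constant; and `μ = 0` would force `c* = 0`.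
-/

open MeasureTheory Real

/-- The paper's `M_{u,α}(r)`. -/
noncomputable def kernelM (α u r : ℝ) : ℝ :=
  ∫ z in Set.Ioc (0 : ℝ) 1, exp (-z * u * r) * z ^ (α - 1)

theorem integral_lt_integral_of_forall_lt {X : Type*} [MeasurableSpace X] {μ : Measure X}
    [NeZero μ] {f g : X → ℝ} (hf : Integrable f μ) (hg : Integrable g μ) (hfg : ∀ x, f x < g x) :
    ∫ x, f x ∂μ < ∫ x, g x ∂μ := by
  rw [← sub_pos, ← integral_sub hg hf, integral_pos_iff_support_of_nonneg
    (fun x => (sub_pos.2 (hfg x)).le) (hg.sub hf)]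
  have : Function.support (fun x => g x - f x) = Set.univ :=
    Set.eq_univ_of_forall fun x => (sub_pos.2 (hfg x)).ne'
  simpa [this] using NeZero.ne μ

theorem intervalIntegral_exp_mul_rpow_lt {α : ℝ} (hα : 0 < α) (u : ℝ) {r s : ℝ}
    (hr : 0 ≤ r) (hrs : r < s) :
    ∫ t in (0 : ℝ)..r, exp (-t * u) * t ^ (α - 1) < ∫ t in (0 : ℝ)..s, exp (-t * u) * t ^ (α - 1) := by
  have hint : ∀ a b : ℝ, IntervalIntegrable (fun t => exp (-t * u) * t ^ (α - 1)) volume a b :=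
    fun a b => (intervalIntegral.intervalIntegrable_rpow' (by linarith)).continuousOn_mul
      (by fun_prop)
  rw [← intervalIntegral.integral_add_adjacent_intervals (hint 0 r) (hint r s), lt_add_iff_pos_right]
  exact intervalIntegral.intervalIntegral_pos_of_pos_on (hint r s)
    (fun t ht => mul_pos (exp_pos _) (rpow_pos_of_pos (hr.trans_lt ht.1) _)) hrs

theorem rpow_mul_kernelM_eq_intervalIntegral (α u : ℝ) {r : ℝ} (hr : 0 < r) :
    r ^ α * kernelM α u r = ∫ t in (0 : ℝ)..r, exp (-t * u) * t ^ (α - 1) := by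
  have hpoint : ∀ z ∈ Set.uIcc (0 : ℝ) 1,
      r ^ α * (exp (-z * u * r) * z ^ (α - 1)) = r * (exp (-(z * r) * u) * (z * r) ^ (α - 1)) := by
    intro z hz
    rw [Set.uIcc_of_le zero_le_one] at hz
    rw [mul_rpow hz.1 hr.le, rpow_sub_one hr.ne']
    field_simp
  rw [kernelM, ← intervalIntegral.integral_of_le zero_le_one, ← intervalIntegral.integral_const_mul,
    intervalIntegral.integral_congr hpoint, intervalIntegral.integral_const_mul,
    intervalIntegral.integral_comp_mul_right (fun t => exp (-t * u) * t ^ (α - 1)) hr.ne',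
    smul_eq_mul, ← mul_assoc, mul_inv_cancel₀ hr.ne', one_mul, zero_mul, one_mul]

theorem rpow_mul_kernelM_lt {α : ℝ} (hα : 0 < α) (u : ℝ) {r s : ℝ} (hr : 0 < r) (hrs : r < s) :
    r ^ α * kernelM α u r < s ^ α * kernelM α u s := by
  rw [rpow_mul_kernelM_eq_intervalIntegral α u hr,
    rpow_mul_kernelM_eq_intervalIntegral α u (hr.trans hrs)]
  exact intervalIntegral_exp_mul_rpow_lt hα u hr.le hrs

/-- For `α > 0` and `c* ≠ 0`, the function `k(r) = c*/r^α` admits no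
representation `k(r) = ∫₀^∞ M_{u,α}(r) μ(du)` for a positive measure `μ` on
`(0,∞)`, where `M_{u,α}(r) = ∫₀¹ e^{-zur} z^{α-1} dz`. -/
theorem no_M_representation_of_power (α c : ℝ) (hα : 0 < α) (hc : c ≠ 0) :
    ¬ ∃ μ : Measure ℝ, μ (Set.Iic 0) = 0 ∧
      ∀ r : ℝ, 0 < r →
        c / r ^ α =
          ∫ u, (∫ z in Set.Ioc (0 : ℝ) 1, Real.exp (-z * u * r) * z ^ (α - 1)) ∂μ := by
  rintro ⟨μ, -, hrep⟩
  change ∀ r : ℝ, 0 < r → c / r ^ α = ∫ u, kernelM α u r ∂μ at hrep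
  have hne : ∀ r : ℝ, 0 < r → ∫ u, kernelM α u r ∂μ ≠ 0 := fun r hr =>
    hrep r hr ▸ div_ne_zero hc (rpow_pos_of_pos hr α).ne'
  have hconst : ∀ r : ℝ, 0 < r → ∫ u, r ^ α * kernelM α u r ∂μ = c := fun r hr => by
    rw [integral_const_mul, ← hrep r hr, mul_div_cancel₀ _ (rpow_pos_of_pos hr α).ne']
  have : NeZero μ := ⟨by rintro rfl; exact hne 1 one_pos (integral_zero_measure _)⟩
  have hlt := integral_lt_integral_of_forall_lt
    ((Integrable.of_integral_ne_zero (hne 1 one_pos)).const_mul _)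
    ((Integrable.of_integral_ne_zero (hne 2 two_pos)).const_mul _)
    (fun u => rpow_mul_kernelM_lt hα u one_pos one_lt_two)
  rw [hconst 1 one_pos, hconst 2 two_pos] at hlt
  exact hlt.false
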